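/- Let A be a uniform algebra on a compact Hausdorff space X, let φ : A → ℂ be a character (nonzero algebra homomorphism), and let λ be a regular Borel probability measure on X representing φ (i.e., φ(f) = ∫ f dλ for all f ∈ A). Suppose the support E of λ contains a point b with the property that there exists f ∈ A with φ(f) = 0 and f(b) = 1. Then the restriction algebra A|E is not dense in C(E). -/

import Mathlib

/-!
For `g ∈ A` we have `∫ g f dλ = φ (g f) = φ g φ f = 0`, so the measure `f λ`, which lives on
`E`, annihilates `A|E`. If `A|E` were dense in `C(E)`, it would annihilate `conj f`, giving
`∫ |f|² dλ = 0`; but `|f|²` is continuous, equal to `1` at `b`, and every neighbourhood of a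
point of the support has positive measure.
-/

open MeasureTheory

variable {X : Type} [TopologicalSpace X] [CompactSpace X] [T2Space X]
  [MeasurableSpace X] [BorelSpace X]

/-- The closed support of a measure: points all of whose open neighbourhoods have
positive measure. -/
def msupp (μ : Measure X) : Set X :=
  {x : X | ∀ U : Set X, IsOpen U → x ∈ U → μ U ≠ 0}

open ComplexConjugate

theorem msupp_eq_support {α : Type} [TopologicalSpace α] [MeasurableSpace α] (μ : Measure α) :
    msupp μ = μ.support := by
  simp [Measure.support_eq_forall_isOpen, msupp, pos_iff_ne_zero, imp.swap]

theorem continuous_integral_continuousMap {α E : Type*} [TopologicalSpace α] [CompactSpace α]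
    [MeasurableSpace α] [BorelSpace α] [NormedAddCommGroup E] [NormedSpace ℝ E]
    [SecondCountableTopologyEither α E] (μ : Measure α) [IsFiniteMeasure μ] :
    Continuous fun g : C(α, E) => ∫ x, g x ∂μ := by
  have hLp : (fun g : C(α, E) => ∫ x, g x ∂μ) =
      fun g => ∫ x, ContinuousMap.toLp (E := E) 1 μ ℝ g x ∂μ := by
    ext g
    exact integral_congr_ae (ContinuousMap.coeFn_toLp μ g).symm
  rw [hLp]
  exact continuous_integral.comp (ContinuousMap.toLp 1 μ ℝ).continuous

theorem integral_subtype_comap_of_ae_mem {α E : Type*} [MeasurableSpace α]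
    [NormedAddCommGroup E] [NormedSpace ℝ E] {μ : Measure α} {s : Set α} (hs : MeasurableSet s)
    (h : ∀ᵐ x ∂μ, x ∈ s) (g : α → E) :
    ∫ y : s, g y ∂(μ.comap Subtype.val) = ∫ x, g x ∂μ := by
  rw [integral_subtype_comap hs, Measure.restrict_eq_self_of_ae_mem h]

theorem integral_pos_of_mem_measureSupport {α : Type*} [TopologicalSpace α] [MeasurableSpace α]
    {μ : Measure α} {g : α → ℝ} (hg : Continuous g) (hg0 : 0 ≤ g) (hgi : Integrable g μ)
    {b : α} (hb : b ∈ μ.support) (hgb : g b ≠ 0) :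
    0 < ∫ x, g x ∂μ :=
  (integral_pos_iff_support_of_nonneg hg0 hgi).2 <|
    (Measure.mem_support_iff_forall b).1 hb _ (hg.isOpen_support.mem_nhds hgb)

theorem integral_mul_eq_zero_of_map_eq_zero {α : Type*} [TopologicalSpace α] [MeasurableSpace α]
    {A : Subalgebra ℂ C(α, ℂ)} {φ : A →ₐ[ℂ] ℂ} {μ : Measure α}
    (hrep : ∀ f : A, φ f = ∫ x, (f : C(α, ℂ)) x ∂μ) {f : A} (hf : φ f = 0) (g : A) :
    ∫ x, (g : C(α, ℂ)) x * (f : C(α, ℂ)) x ∂μ = 0 := by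
  simpa [hf] using (hrep (g * f)).symm

theorem integral_normSq_eq_zero_of_dense_restrict_support {α : Type*} [TopologicalSpace α]
    [CompactSpace α] [MeasurableSpace α] [BorelSpace α] (μ : Measure α) [IsFiniteMeasure μ]
    [μ.Regular] (S : Set C(α, ℂ))
    (hS : Dense ((fun g : C(α, ℂ) => g.restrict μ.support) '' S)) (k : C(α, ℂ))
    (hk : ∀ g ∈ S, ∫ x, g x * k x ∂μ = 0) :
    ∫ x, Complex.normSq (k x) ∂μ = 0 := by
  set E := μ.support
  have : CompactSpace E := isCompact_iff_compactSpace.mp Measure.isClosed_support.isCompact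
  have transfer := integral_subtype_comap_of_ae_mem (E := ℂ) (s := E)
    Measure.isClosed_support.measurableSet Measure.support_mem_ae_of_regular
  have hcont : Continuous fun h : C(E, ℂ) => ∫ y, (h * k.restrict E) y ∂(μ.comap Subtype.val) :=
    (continuous_integral_continuousMap _).comp (continuous_mul_const _)
  have hvanish := hcont.ext_on hS continuous_const (by
    rintro _ ⟨g, hg, rfl⟩
    simpa [transfer fun x => g x * k x] using hk g hg)
  have hconj : ∫ x, conj (k x) * k x ∂μ = 0 := by
    simpa [transfer fun x => conj (k x) * k x] using congr_fun hvanish ((star k).restrict E)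
  have hC : ((∫ x, Complex.normSq (k x) ∂μ : ℝ) : ℂ) = 0 := by
    rw [← integral_complex_ofReal]
    simpa [Complex.normSq_eq_conj_mul_self] using hconj
  exact_mod_cast hC

theorem stmt_5 (A : Subalgebra ℂ C(X, ℂ))
    (φ : A →ₐ[ℂ] ℂ)
    (lam : Measure X) [IsProbabilityMeasure lam] (hreg : lam.Regular)
    (hrep : ∀ f : A, φ f = ∫ x, (f : C(X, ℂ)) x ∂lam)
    (b : X) (hb : b ∈ msupp lam)
    (f : A) (hφf : φ f = 0) (hfb : (f : C(X, ℂ)) b = 1) :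
    ¬ Dense ((fun g : C(X, ℂ) => g.restrict (msupp lam)) '' (A : Set C(X, ℂ))) := by
  intro hdense
  rw [msupp_eq_support] at hb hdense
  have : lam.Regular := hreg
  have hcont : Continuous fun x => Complex.normSq ((f : C(X, ℂ)) x) := by fun_prop
  have hnull : ∫ x, Complex.normSq ((f : C(X, ℂ)) x) ∂lam = 0 :=
    integral_normSq_eq_zero_of_dense_restrict_support lam A hdense f fun g hg =>
      integral_mul_eq_zero_of_map_eq_zero hrep hφf ⟨g, hg⟩
  have hpos : 0 < ∫ x, Complex.normSq ((f : C(X, ℂ)) x) ∂lam :=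
    integral_pos_of_mem_measureSupport hcont (fun x => Complex.normSq_nonneg _)
      (hcont.integrable_of_hasCompactSupport (.of_compactSpace _)) hb (by simp [hfb])
  exact hpos.ne' hnull
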